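/- arXiv:1702.06350 — 6 statements merged into one kernel-verified Lean document; each statement's English description precedes it below -/
import Mathlib

section
/- Let H be a k-uniform hypergraph on {1,…,n} whose degrees are ordered d_1 ≥ d_2 ≥ … ≥ d_n. For each s with 1 ≤ s ≤ n, set A_1 = C(n−2, k−2)/(k−1), A_2 = ∑_{r=0}^{k−2} ((r+1)/(k−1)) · C(s−1, r+1) · C(n−s, k−r−2), Δ_s = (d_s + s·A_1 − A_2)² + 4·A_1·∑_{t=1}^{s−1} (d_t − d_s), and φ_s = (d_s − A_2 + (s−2)·A_1 + √Δ_s)/2. Then every eigenvalue λ of the adjacency tensor A(H) satisfies |λ| ≤ φ_s for every s with 1 ≤ s ≤ n, and hence |λ| ≤ min_{1 ≤ s ≤ n} φ_s. -/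
open Finset

/-- A complex number `lam` is an *eigenvalue* of the order-`k`, dimension-`n` tensor `T`
(whose entry `t_{i i₂ … i_k}` is represented as `T i f` with `f = (i₂, …, i_k)`)
if there is a nonzero vector `x : Fin n → ℂ` with
`∑_{i₂,…,i_k} t_{i i₂ … i_k} x_{i₂} ⋯ x_{i_k} = lam · x_i^{k−1}` for every `i`. -/
def IsTensorEigenvalue (n k : ℕ) (T : Fin n → (Fin (k - 1) → Fin n) → ℂ) (lam : ℂ) : Prop :=
  ∃ x : Fin n → ℂ, x ≠ 0 ∧ ∀ i : Fin n,
    ∑ f : Fin (k - 1) → Fin n, T i f * ∏ j, x (f j) = lam * x i ^ (k - 1)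

/-- The degree of vertex `i` in the hypergraph with edge set `E`:
the number of edges containing `i`. -/
def hdegree (n : ℕ) (E : Finset (Finset (Fin n))) (i : Fin n) : ℕ :=
  (E.filter (fun e => i ∈ e)).card

open Classical in
/-- The adjacency tensor of a `k`-uniform hypergraph on `{1,…,n}` with edge set `E`:
the entry `a_{i i₂ … i_k}` equals `1/(k−1)!` if `i, i₂, …, i_k` are distinct and
`{i, i₂, …, i_k} ∈ E`, and `0` otherwise. -/
noncomputable def adjTensor (n k : ℕ) (E : Finset (Finset (Fin n))) :
    Fin n → (Fin (k - 1) → Fin n) → ℝ := fun i f =>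
  if Function.Injective f ∧ i ∉ Finset.image f Finset.univ ∧
      insert i (Finset.image f Finset.univ) ∈ E then
    1 / (Nat.factorial (k - 1) : ℝ)
  else 0

open Classical in
/-- The signless Laplacian tensor `Q(H) = D(H) + A(H)` of a `k`-uniform hypergraph:
`D(H)` is the diagonal tensor whose `(i,…,i)` entry is the degree `d_i`. -/
noncomputable def signlessLapTensor (n k : ℕ) (E : Finset (Finset (Fin n))) :
    Fin n → (Fin (k - 1) → Fin n) → ℝ := fun i f =>
  (if ∀ j, f j = i then (hdegree n E i : ℝ) else 0) + adjTensor n k E i f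

/-!
For an eigenpair `(λ, x)` put `z u = ‖x u‖ ^ (k - 1)`. The triangle inequality and AM–GM on each
edge give `‖λ‖ z_i ≤ ∑ u, B i u * z u`, where `B i u = codeg(i, u) / (k - 1)` is a nonnegative
matrix with zero diagonal, entries at most `A₁ = C(n-2, k-2) / (k - 1)` and row sums `d_i`.
For such a matrix compare `z` on the first `s - 1` vertices with `z_p`, the largest value of `z`
beyond them: summing the rows of those vertices and using the row of `p` yields
`(ρ - d_s) (ρ + A₁) ≤ A₁ ∑_{t < s} (d_t - d_s)` when `ρ > (s - 2) A₁`, and otherwise the same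
inequality follows from the one for `s - 1`. Vandermonde's identity gives `A₂ = (s - 1) A₁`, so
`φ_s` is the larger root of this quadratic in `ρ = ‖λ‖`.
-/

open scoped Nat in
theorem card_injective_with_image_eq {α : Type*} [Fintype α] [DecidableEq α] {m : ℕ}
    {A : Finset α} (hA : #A = m) :
    #{f : Fin m → α | Function.Injective f ∧ image f univ = A} = m ! := by
  subst hA
  have hset : ({f : Fin #A → α | Function.Injective f ∧ image f univ = A} : Finset _) =
      (univ : Finset (Fin #A ≃ A)).image (fun e j => (e j : α)) := by
    ext f
    simp only [mem_filter, mem_univ, true_and, mem_image]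
    constructor
    · rintro ⟨hinj, himg⟩
      have hmem : ∀ j, f j ∈ A := fun j => himg ▸ mem_image_of_mem f (mem_univ j)
      refine ⟨Equiv.ofBijective (fun j => ⟨f j, hmem j⟩) ⟨fun j j' h => hinj congr($h.1), ?_⟩, rfl⟩
      rintro ⟨a, ha⟩
      obtain ⟨j, -, rfl⟩ := mem_image.1 (himg ▸ ha)
      exact ⟨j, rfl⟩
    · rintro ⟨e, -, rfl⟩
      refine ⟨Subtype.val_injective.comp e.injective, ?_⟩
      ext a
      simp only [mem_image, mem_univ, true_and]
      exact ⟨fun ⟨j, hj⟩ => hj ▸ (e j).2, fun ha => ⟨e.symm ⟨a, ha⟩, by simp⟩⟩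
  rw [hset, Finset.card_image_of_injective _ fun e e' h =>
      Equiv.ext fun j => Subtype.ext (congr_fun h j), card_univ,
    Fintype.card_equiv A.equivFin.symm, Fintype.card_fin]

open scoped Nat in
theorem sum_adjTensor_mul_prod {n k : ℕ} {E : Finset (Finset (Fin n))}
    (huniform : ∀ e ∈ E, #e = k) (i : Fin n) (w : Fin n → ℝ) :
    ∑ f, adjTensor n k E i f * ∏ j, w (f j) = ∑ e ∈ E with i ∈ e, ∏ u ∈ e.erase i, w u := by
  classical
  set P : (Fin (k - 1) → Fin n) → Prop := fun f => Function.Injective f ∧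
    i ∉ image f univ ∧ insert i (image f univ) ∈ E
  have hmaps : ∀ f ∈ ({f | P f} : Finset _), insert i (image f univ) ∈ {e ∈ E | i ∈ e} := by
    intro f hf
    simp only [P, mem_filter, mem_univ, true_and] at hf ⊢
    exact ⟨hf.2.2, mem_insert_self _ _⟩
  have hfiber : ∀ e ∈ ({e ∈ E | i ∈ e} : Finset _),
      ∑ f ∈ ({f | P f} : Finset _) with insert i (image f univ) = e,
        1 / ((k - 1)! : ℝ) * ∏ j, w (f j) = ∏ u ∈ e.erase i, w u := by
    intro e he
    rw [mem_filter] at he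
    have hcard : #(e.erase i) = k - 1 := by rw [card_erase_of_mem he.2, huniform e he.1]
    have hset : ({f | P f ∧ insert i (image f univ) = e} : Finset (Fin (k - 1) → Fin n)) =
        ({f | Function.Injective f ∧ image f univ = e.erase i} :
          Finset (Fin (k - 1) → Fin n)) := by
      refine filter_congr fun f _ => ⟨?_, ?_⟩
      · rintro ⟨⟨hinj, hi, -⟩, rfl⟩
        exact ⟨hinj, (erase_insert hi).symm⟩
      · rintro ⟨hinj, himg⟩
        simp only [P, himg, notMem_erase, not_false_eq_true, insert_erase he.2, he.1, and_self,
          hinj]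
    have hprod : ∀ f ∈ ({f | Function.Injective f ∧ image f univ = e.erase i} :
        Finset (Fin (k - 1) → Fin n)),
        ∏ j, w (f j) = ∏ u ∈ e.erase i, w u := by
      intro f hf
      obtain ⟨hinj, himg⟩ := (mem_filter.1 hf).2
      rw [← himg, prod_image fun a _ b _ h => hinj h]
    rw [filter_filter, hset, sum_congr rfl fun f hf => by rw [hprod f hf], sum_const,
      card_injective_with_image_eq hcard, nsmul_eq_mul]
    field_simp
  unfold adjTensor
  simp_rw [ite_mul, zero_mul, ← sum_filter]
  rw [← sum_fiberwise_of_maps_to hmaps]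
  exact sum_congr rfl hfiber

theorem Real.prod_le_sum_pow_card_div_card {ι : Type*} {A : Finset ι} (hA : A.Nonempty)
    {y : ι → ℝ} (hy : ∀ u ∈ A, 0 ≤ y u) :
    ∏ u ∈ A, y u ≤ (∑ u ∈ A, y u ^ #A) / #A := by
  have hcard : (#A : ℝ) ≠ 0 := by exact_mod_cast hA.card_pos.ne'
  calc ∏ u ∈ A, y u = ∏ u ∈ A, (y u ^ #A) ^ (#A : ℝ)⁻¹ :=
        prod_congr rfl fun u hu =>
          (Real.pow_rpow_inv_natCast (hy u hu) (by exact_mod_cast hcard)).symm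
    _ ≤ ∑ u ∈ A, (#A : ℝ)⁻¹ * y u ^ #A :=
        Real.geom_mean_le_arith_mean_weighted A _ _ (fun _ _ => by positivity)
          (by rw [sum_const, nsmul_eq_mul]; field_simp) fun u hu => pow_nonneg (hy u hu) _
    _ = (∑ u ∈ A, y u ^ #A) / #A := by rw [← mul_sum, inv_mul_eq_div]

theorem card_filter_mem_mem_le_choose {α : Type*} [Fintype α] [DecidableEq α] {k : ℕ}
    {E : Finset (Finset α)} (huniform : ∀ e ∈ E, #e = k) {i u : α} (hiu : i ≠ u) :
    #{e ∈ E | i ∈ e ∧ u ∈ e} ≤ (Fintype.card α - 2).choose (k - 2) := by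
  have hmaps : ∀ e ∈ ({e ∈ E | i ∈ e ∧ u ∈ e} : Finset _),
      e \ {i, u} ∈ powersetCard (k - 2) (univ \ {i, u}) := by
    intro e he
    obtain ⟨heE, hie, hue⟩ := mem_filter.1 he
    rw [mem_powersetCard, card_sdiff_of_subset (insert_subset hie (singleton_subset_iff.2 hue)),
      card_pair hiu, huniform e heE]
    exact ⟨sdiff_subset_sdiff (subset_univ e) le_rfl, rfl⟩
  have hinj : Set.InjOn (· \ {i, u}) (({e ∈ E | i ∈ e ∧ u ∈ e} : Finset (Finset α)) :
      Set (Finset α)) := by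
    intro e he e' he' h
    have hsub : ∀ e ∈ ({e ∈ E | i ∈ e ∧ u ∈ e} : Finset _), {i, u} ⊆ e := fun e he =>
      insert_subset (mem_filter.1 he).2.1 (singleton_subset_iff.2 (mem_filter.1 he).2.2)
    rw [← sdiff_union_of_subset (hsub e he), ← sdiff_union_of_subset (hsub e' he')]
    exact congr($h ∪ {i, u})
  calc #{e ∈ E | i ∈ e ∧ u ∈ e} ≤ #(powersetCard (k - 2) (univ \ {i, u})) :=
        card_le_card_of_injOn _ hmaps hinj
    _ = (Fintype.card α - 2).choose (k - 2) := by
        rw [card_powersetCard, card_sdiff_of_subset (subset_univ _), card_pair hiu, card_univ]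

theorem sum_sum_eq_sum_card_filter_mul {ι α : Type*} [Fintype α] [DecidableEq α]
    (F : Finset ι) (t : ι → Finset α) (z : α → ℝ) :
    ∑ e ∈ F, ∑ u ∈ t e, z u = ∑ u, #{e ∈ F | u ∈ t e} * z u := by
  rw [sum_comm' (t' := univ) (s' := fun u => {e ∈ F | u ∈ t e}) (by simp)]
  simp only [sum_const, nsmul_eq_mul]

section CodegreeWeight

variable {α : Type*} [DecidableEq α] {k : ℕ} {E : Finset (Finset α)}

noncomputable def codegreeWeight (k : ℕ) (E : Finset (Finset α)) (i u : α) : ℝ :=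
  #{e ∈ E | i ∈ e ∧ u ∈ e.erase i} / ((k : ℝ) - 1)

theorem codegreeWeight_nonneg (hk : 2 ≤ k) (i u : α) : 0 ≤ codegreeWeight k E i u := by
  have : (2 : ℝ) ≤ k := by exact_mod_cast hk
  unfold codegreeWeight
  exact div_nonneg (Nat.cast_nonneg _) (by linarith)

theorem codegreeWeight_self (i : α) : codegreeWeight k E i i = 0 := by
  simp [codegreeWeight]

theorem codegreeWeight_le [Fintype α] (hk : 2 ≤ k) (huniform : ∀ e ∈ E, #e = k) (i u : α) :
    codegreeWeight k E i u ≤ (Fintype.card α - 2).choose (k - 2) / ((k : ℝ) - 1) := by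
  have : (2 : ℝ) ≤ k := by exact_mod_cast hk
  rcases eq_or_ne i u with rfl | hiu
  · rw [codegreeWeight_self]; exact div_nonneg (Nat.cast_nonneg _) (by linarith)
  have hfilter :
      ({e ∈ E | i ∈ e ∧ u ∈ e.erase i} : Finset (Finset α)) = {e ∈ E | i ∈ e ∧ u ∈ e} :=
    filter_congr fun e _ => by rw [mem_erase, and_iff_right hiu.symm]
  unfold codegreeWeight
  rw [hfilter]
  gcongr
  · linarith
  · exact card_filter_mem_mem_le_choose huniform hiu

theorem sum_codegreeWeight_mul [Fintype α] (i : α) (z : α → ℝ) :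
    ∑ u, codegreeWeight k E i u * z u =
      (∑ e ∈ E with i ∈ e, ∑ u ∈ e.erase i, z u) / ((k : ℝ) - 1) := by
  simp only [sum_sum_eq_sum_card_filter_mul, filter_filter, sum_div, codegreeWeight,
    div_mul_eq_mul_div]

theorem sum_codegreeWeight [Fintype α] (hk : 2 ≤ k) (huniform : ∀ e ∈ E, #e = k) (i : α) :
    ∑ u, codegreeWeight k E i u = #{e ∈ E | i ∈ e} := by
  have : (2 : ℝ) ≤ k := by exact_mod_cast hk
  have hcard : ∀ e ∈ ({e ∈ E | i ∈ e} : Finset (Finset α)),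
      ∑ u ∈ e.erase i, (1 : ℝ) = (k : ℝ) - 1 := by
    intro e he
    obtain ⟨heE, hie⟩ := mem_filter.1 he
    rw [sum_const, card_erase_of_mem hie, huniform e heE, nsmul_one, Nat.cast_pred (by omega)]
  have := sum_codegreeWeight_mul (k := k) (E := E) i 1
  simp only [Pi.one_apply, mul_one] at this
  rw [this, sum_congr rfl hcard, sum_const, nsmul_eq_mul, mul_div_cancel_right₀ _ (by linarith)]

end CodegreeWeight

theorem adjTensor_nonneg (n k : ℕ) (E : Finset (Finset (Fin n))) (i : Fin n)
    (f : Fin (k - 1) → Fin n) : 0 ≤ adjTensor n k E i f := by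
  unfold adjTensor
  split_ifs <;> positivity

theorem norm_mul_pow_le_sum_codegreeWeight_mul {n k : ℕ} (hk : 2 ≤ k)
    {E : Finset (Finset (Fin n))} (huniform : ∀ e ∈ E, #e = k) {lam : ℂ} {x : Fin n → ℂ}
    {i : Fin n} (hx : ∑ f, ((adjTensor n k E i f : ℝ) : ℂ) * ∏ j, x (f j) = lam * x i ^ (k - 1)) :
    ‖lam‖ * ‖x i‖ ^ (k - 1) ≤ ∑ u, codegreeWeight k E i u * ‖x u‖ ^ (k - 1) := by
  have hedge : ∀ e ∈ ({e ∈ E | i ∈ e} : Finset (Finset (Fin n))),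
      ∏ u ∈ e.erase i, ‖x u‖ ≤ (∑ u ∈ e.erase i, ‖x u‖ ^ (k - 1)) / ((k : ℝ) - 1) := by
    intro e he
    obtain ⟨heE, hie⟩ := mem_filter.1 he
    have hcard : #(e.erase i) = k - 1 := by rw [card_erase_of_mem hie, huniform e heE]
    have hne : (e.erase i).Nonempty := card_pos.1 (by omega)
    have := Real.prod_le_sum_pow_card_div_card hne fun u _ => norm_nonneg (x u)
    rwa [hcard, Nat.cast_pred (by omega)] at this
  calc ‖lam‖ * ‖x i‖ ^ (k - 1)
      = ‖∑ f, ((adjTensor n k E i f : ℝ) : ℂ) * ∏ j, x (f j)‖ := by rw [hx, norm_mul, norm_pow]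
    _ ≤ ∑ f, ‖((adjTensor n k E i f : ℝ) : ℂ) * ∏ j, x (f j)‖ := norm_sum_le _ _
    _ = ∑ f, adjTensor n k E i f * ∏ j, ‖x (f j)‖ := by
        refine sum_congr rfl fun f _ => ?_
        rw [norm_mul, norm_prod, Complex.norm_real,
          Real.norm_of_nonneg (adjTensor_nonneg n k E i f)]
    _ = ∑ e ∈ E with i ∈ e, ∏ u ∈ e.erase i, ‖x u‖ :=
        sum_adjTensor_mul_prod huniform i fun u => ‖x u‖
    _ ≤ ∑ e ∈ E with i ∈ e, (∑ u ∈ e.erase i, ‖x u‖ ^ (k - 1)) / ((k : ℝ) - 1) := sum_le_sum hedge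
    _ = ∑ u, codegreeWeight k E i u * ‖x u‖ ^ (k - 1) := by rw [← sum_div, sum_codegreeWeight_mul]

theorem mul_le_mul_add_mul_sum_sub {ι : Type*} [Fintype ι] [DecidableEq ι]
    {B : ι → ι → ℝ} {r z y : ι → ℝ} {a ρ c : ℝ}
    (hB0 : ∀ i j, 0 ≤ B i j) (hBa : ∀ i j, B i j ≤ a) (hdiag : ∀ i, B i i = 0)
    (hr : ∀ i, ∑ j, B i j ≤ r i) (hρ : ∀ i, ρ * z i ≤ ∑ j, B i j * z j)
    (hc : 0 ≤ c) (hy : ∀ j, 0 ≤ y j) (hzy : ∀ j, z j ≤ c + y j) (i : ι) :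
    ρ * z i ≤ r i * c + a * (∑ j, y j - y i) :=
  calc ρ * z i ≤ ∑ j, B i j * z j := hρ i
    _ ≤ ∑ j, B i j * (c + y j) := sum_le_sum fun j _ => mul_le_mul_of_nonneg_left (hzy j) (hB0 i j)
    _ = (∑ j, B i j) * c + ∑ j ∈ univ.erase i, B i j * y j := by
        rw [sum_erase _ (by rw [hdiag, zero_mul]), sum_mul, ← sum_add_distrib]
        simp only [mul_add]
    _ ≤ r i * c + ∑ j ∈ univ.erase i, a * y j :=
        add_le_add (mul_le_mul_of_nonneg_right (hr i) hc)
          (sum_le_sum fun j _ => mul_le_mul_of_nonneg_right (hBa i j) (hy j))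
    _ = r i * c + a * (∑ j, y j - y i) := by rw [← mul_sum, sum_erase_eq_sub (mem_univ i)]

section RowSumBound

variable {n : ℕ} {B : Fin n → Fin n → ℝ} {r z : Fin n → ℝ} {a ρ : ℝ}

theorem sub_mul_add_le_mul_sum_Iio_of_lt
    (hB0 : ∀ i j, 0 ≤ B i j) (hBa : ∀ i j, B i j ≤ a) (hdiag : ∀ i, B i i = 0)
    (hr : ∀ i, ∑ j, B i j ≤ r i) (hanti : Antitone r)
    (hz0 : ∀ j, 0 ≤ z j) (hz : z ≠ 0) (hρ : ∀ i, ρ * z i ≤ ∑ j, B i j * z j)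
    (m : Fin n) (hm : (((m : ℕ) : ℝ) - 1) * a < ρ) :
    (ρ - r m) * (ρ + a) ≤ a * ∑ t ∈ Iio m, (r t - r m) := by
  have ha : 0 ≤ a := hdiag m ▸ hBa m m
  obtain ⟨p, hpm, hp⟩ := exists_max_image (Ici m) z ⟨m, mem_Ici.2 le_rfl⟩
  rw [mem_Ici] at hpm
  set y : Fin n → ℝ := fun u => max (z u - z p) 0
  have hy0 : ∀ u, 0 ≤ y u := fun u => le_max_right _ _
  have hzy : ∀ u, z u ≤ z p + y u := fun u => by linarith [le_max_left (z u - z p) 0]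
  have hy_eq_zero : ∀ u, m ≤ u → y u = 0 := fun u hu =>
    max_eq_right (sub_nonpos.2 (hp u (mem_Ici.2 hu)))
  set σ := ∑ u, y u
  have hσ : ∑ v ∈ Iio m, y v = σ :=
    sum_subset (subset_univ _) fun u _ hu => hy_eq_zero u (not_lt.1 (by simpa using hu))
  have core := mul_le_mul_add_mul_sum_sub hB0 hBa hdiag hr hρ (hz0 p) hy0 hzy
  have hA : ρ * z p ≤ r m * z p + a * σ := by
    have := core p
    rw [hy_eq_zero p hpm, sub_zero] at this
    nlinarith [mul_le_mul_of_nonneg_right (hanti hpm) (hz0 p)]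
  have hBv : ∀ v ∈ Iio m, ρ * (z p + y v) ≤ r v * z p + a * (σ - y v) := by
    intro v hv
    rcases le_total (z v) (z p) with h | h
    · rw [show y v = 0 from max_eq_right (by linarith), add_zero, sub_zero]
      nlinarith [mul_le_mul_of_nonneg_right (hanti (mem_Iio.1 hv).le) (hz0 p)]
    · rw [show z p + y v = z v by simp [y, max_eq_left (sub_nonneg.2 h)]]
      exact core v
  have hB : (ρ - (m - 1) * a) * σ ≤ (∑ t ∈ Iio m, r t - m * ρ) * z p := by
    have := sum_le_sum hBv
    simp only [mul_add, sum_add_distrib, ← mul_sum, ← sum_mul, mul_sub, sum_sub_distrib,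
      sum_const, Fin.card_Iio, nsmul_eq_mul, hσ] at this
    linarith
  have hzp : 0 < z p := by
    refine (hz0 p).lt_of_ne fun h => ?_
    obtain ⟨j, hj⟩ := Function.ne_iff.1 hz
    have hyj : y j = z j := by simp [y, ← h, max_eq_left (hz0 j)]
    have hσpos : 0 < σ := (lt_of_le_of_ne (hz0 j) (Ne.symm hj)).trans_le
      (hyj ▸ single_le_sum (fun u _ => hy0 u) (mem_univ j))
    rw [← h, mul_zero] at hB
    nlinarith [mul_pos (sub_pos.2 hm) hσpos]
  have key : (ρ - r m) * (ρ - (m - 1) * a) ≤ a * (∑ t ∈ Iio m, r t - m * ρ) := by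
    refine le_of_mul_le_mul_right ?_ hzp
    calc (ρ - r m) * (ρ - (m - 1) * a) * z p = (ρ * z p - r m * z p) * (ρ - (m - 1) * a) := by ring
      _ ≤ a * σ * (ρ - (m - 1) * a) := mul_le_mul_of_nonneg_right (by linarith) (by linarith)
      _ = a * ((ρ - (m - 1) * a) * σ) := by ring
      _ ≤ a * ((∑ t ∈ Iio m, r t - m * ρ) * z p) := mul_le_mul_of_nonneg_left hB ha
      _ = a * (∑ t ∈ Iio m, r t - m * ρ) * z p := by ring
  rw [sum_sub_distrib, sum_const, Fin.card_Iio, nsmul_eq_mul]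
  linear_combination key

theorem sub_mul_add_le_mul_sum_Iio
    (hB0 : ∀ i j, 0 ≤ B i j) (hBa : ∀ i j, B i j ≤ a) (hdiag : ∀ i, B i i = 0)
    (hr : ∀ i, ∑ j, B i j ≤ r i) (hanti : Antitone r)
    (hz0 : ∀ j, 0 ≤ z j) (hz : z ≠ 0) (hρ0 : 0 ≤ ρ) (hρ : ∀ i, ρ * z i ≤ ∑ j, B i j * z j)
    (m : Fin n) :
    (ρ - r m) * (ρ + a) ≤ a * ∑ t ∈ Iio m, (r t - r m) := by
  have ha : 0 ≤ a := hdiag m ▸ hBa m m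
  obtain ⟨m, hm⟩ := m
  induction m with
  | zero =>
    rcases lt_or_ge (((0 : ℕ) - 1 : ℝ) * a) ρ with hlt | hle
    · exact sub_mul_add_le_mul_sum_Iio_of_lt hB0 hBa hdiag hr hanti hz0 hz hρ _ hlt
    have hρa : ρ + a = 0 := by push_cast at hle; linarith
    have hIio : Iio (⟨0, hm⟩ : Fin n) = ∅ := card_eq_zero.1 (Fin.card_Iio _)
    rw [hρa, mul_zero, hIio, sum_empty, mul_zero]
  | succ m ih =>
    rcases lt_or_ge ((((m + 1 : ℕ) : ℝ) - 1) * a) ρ with hlt | hle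
    · exact sub_mul_add_le_mul_sum_Iio_of_lt hB0 hBa hdiag hr hanti hz0 hz hρ _ hlt
    have hm' : m < n := by omega
    have hIio : Iio (⟨m + 1, hm⟩ : Fin n) = insert ⟨m, hm'⟩ (Iio ⟨m, hm'⟩) := by
      ext t; simp only [mem_Iio, mem_insert, Fin.lt_def, Fin.ext_iff]; omega
    have hmono : r ⟨m + 1, hm⟩ ≤ r ⟨m, hm'⟩ := hanti (Fin.mk_le_mk.2 (by omega))
    have ih := ih hm'
    simp only [sum_sub_distrib, sum_const, Fin.card_Iio, nsmul_eq_mul] at ih ⊢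
    rw [hIio, sum_insert (by simp)]
    push_cast at hle ⊢
    nlinarith [mul_le_mul_of_nonneg_left (show ρ + a ≤ (m + 1) * a by linarith)
      (sub_nonneg.2 hmono)]

end RowSumBound

theorem le_div_two_of_sub_mul_add_le {ρ d a D : ℝ} (h : (ρ - d) * (ρ + a) ≤ a * D) :
    ρ ≤ (d - a + √((d + a) ^ 2 + 4 * a * D)) / 2 := by
  have hsq : (2 * ρ - (d - a)) ^ 2 ≤ (d + a) ^ 2 + 4 * a * D := by nlinarith
  linarith [(le_abs_self _).trans (Real.abs_le_sqrt hsq)]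

theorem sum_range_succ_mul_choose_mul_choose (a b c : ℕ) :
    ∑ r ∈ range (c + 1), (r + 1) * (a + 1).choose (r + 1) * b.choose (c - r) =
      (a + 1) * (a + b).choose c := by
  rw [Nat.add_choose_eq, Finset.Nat.sum_antidiagonal_eq_sum_range_succ_mk, mul_sum]
  refine sum_congr rfl fun r _ => ?_
  rw [mul_comm (r + 1), ← Nat.add_one_mul_choose_eq, mul_assoc]

theorem sum_range_mul_choose_mul_choose_div {n k s : ℕ} (hk : 2 ≤ k) (hs : 1 ≤ s) (hsn : s ≤ n) :
    ∑ r ∈ range (k - 1), (((r : ℝ) + 1) / ((k : ℝ) - 1)) * ((s - 1).choose (r + 1) : ℝ)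
        * ((n - s).choose (k - r - 2) : ℝ) =
      ((s : ℝ) - 1) * (((n - 2).choose (k - 2) : ℝ) / ((k : ℝ) - 1)) := by
  obtain ⟨c, rfl⟩ : ∃ c, k = c + 2 := ⟨k - 2, by omega⟩
  obtain ⟨t, rfl⟩ : ∃ t, s = t + 1 := ⟨s - 1, by omega⟩
  rcases t with _ | a
  · simp
  obtain ⟨b, rfl⟩ : ∃ b, n = a + 2 + b := ⟨n - (a + 2), by omega⟩
  have hsum := congr_arg (Nat.cast : ℕ → ℝ) (sum_range_succ_mul_choose_mul_choose a b c)
  push_cast at hsum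
  simp only [show c + 2 - 1 = c + 1 by omega, show a + 1 + 1 - 1 = a + 1 by omega,
    show a + 2 + b - (a + 1 + 1) = b by omega, show a + 2 + b - 2 = a + b by omega,
    show c + 2 - 2 = c by omega]
  have hterm : ∀ r ∈ range (c + 1),
      ((r : ℝ) + 1) / (((c + 2 : ℕ) : ℝ) - 1) * ((a + 1).choose (r + 1) : ℝ)
        * (b.choose (c + 2 - r - 2) : ℝ) =
      ((r : ℝ) + 1) * ((a + 1).choose (r + 1) : ℝ) * (b.choose (c - r) : ℝ) / ((c : ℝ) + 1) := by
    intro r _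
    rw [show c + 2 - r - 2 = c - r by omega]
    push_cast
    ring
  rw [sum_congr rfl hterm, ← sum_div, hsum]
  push_cast
  ring

/-- **Theorem 3.1.**  Let `H` be a `k`-uniform hypergraph on `{1,…,n}` whose degrees are
ordered `d₁ ≥ d₂ ≥ ⋯ ≥ d_n`.  For `1 ≤ s ≤ n` let
`A₁ = C(n−2,k−2)/(k−1)`, `A₂ = ∑_{r=0}^{k−2} ((r+1)/(k−1))·C(s−1,r+1)·C(n−s,k−r−2)`,
`Δ = (d_s + s·A₁ − A₂)² + 4·A₁·∑_{t=1}^{s−1}(d_t − d_s)`, and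
`φ = (d_s − A₂ + (s−2)·A₁ + √Δ)/2`.  Then every eigenvalue `lam` of the adjacency tensor
satisfies `|lam| ≤ φ` (hence `|lam| ≤ min_{1≤s≤n} φ_s`). -/
theorem spectral_radius_le_phi (n k : ℕ) (hk : 2 ≤ k)
    (E : Finset (Finset (Fin n))) (huniform : ∀ e ∈ E, e.card = k)
    (hmono : ∀ i j : Fin n, i ≤ j → hdegree n E j ≤ hdegree n E i)
    (lam : ℂ) (hlam : IsTensorEigenvalue n k (fun i f => ((adjTensor n k E i f : ℝ) : ℂ)) lam)
    (s : ℕ) (hs1 : 1 ≤ s) (hsn : s ≤ n)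
    (A₁ A₂ Δ φ : ℝ)
    (hA₁ : A₁ = ((n - 2).choose (k - 2) : ℝ) / ((k : ℝ) - 1))
    (hA₂ : A₂ = ∑ r ∈ Finset.range (k - 1),
        (((r : ℝ) + 1) / ((k : ℝ) - 1)) * ((s - 1).choose (r + 1) : ℝ)
          * ((n - s).choose (k - r - 2) : ℝ))
    (hΔ : Δ = ((hdegree n E ⟨s - 1, by omega⟩ : ℝ) + (s : ℝ) * A₁ - A₂) ^ 2
        + 4 * A₁ * ∑ t ∈ Finset.univ.filter (fun t : Fin n => (t : ℕ) < s - 1),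
            ((hdegree n E t : ℝ) - (hdegree n E ⟨s - 1, by omega⟩ : ℝ)))
    (hφ : φ = ((hdegree n E ⟨s - 1, by omega⟩ : ℝ) - A₂ + ((s : ℝ) - 2) * A₁
        + Real.sqrt Δ) / 2) :
    ‖lam‖ ≤ φ := by
  obtain ⟨x, hx0, hx⟩ := hlam
  have hz : (fun u => ‖x u‖ ^ (k - 1)) ≠ 0 := fun h =>
    hx0 (funext fun j => norm_eq_zero.1 ((pow_eq_zero_iff (by omega)).1 (congr_fun h j)))
  have hbound := sub_mul_add_le_mul_sum_Iio (r := fun i => (hdegree n E i : ℝ)) (a := A₁)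
    (codegreeWeight_nonneg hk)
    (fun i j => (codegreeWeight_le hk huniform i j).trans_eq (by rw [hA₁, Fintype.card_fin]))
    codegreeWeight_self (fun i => (sum_codegreeWeight hk huniform i).le)
    (fun i j hij => Nat.cast_le.2 (hmono i j hij))
    (fun j => by positivity) hz (norm_nonneg lam)
    (fun i => norm_mul_pow_le_sum_codegreeWeight_mul hk huniform (hx i)) ⟨s - 1, by omega⟩
  have hIio : univ.filter (fun t : Fin n => (t : ℕ) < s - 1) = Iio ⟨s - 1, by omega⟩ := by
    ext t; simp [Fin.lt_def]
  have hA₂' : A₂ = (s - 1) * A₁ := by rw [hA₂, hA₁, sum_range_mul_choose_mul_choose_div hk hs1 hsn]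
  rw [hφ, hΔ, hIio, hA₂']
  convert le_div_two_of_sub_mul_add_le hbound using 4 <;> ring
end

section
/- Let H be a k-uniform hypergraph on {1,…,n} with m edges and minimum degree δ. Then every eigenvalue λ of the adjacency tensor A(H) satisfies |λ| ≤ ( δ − C(n−1, k−1) + ((n−2)/(k−1))·C(n−2, k−2) + √( ( δ + (n/(k−1))·C(n−2, k−2) − C(n−1, k−1) )² + (4/(k−1))·C(n−2, k−2)·(k·m − n·δ) ) ) / 2. -/
open Finset

/-!
Put `y u = ‖x u‖ ^ (k - 1)`. The triangle inequality and AM–GM turn the eigen-equation at `v`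
into `‖λ‖ y v ≤ ∑_{u ≠ v} w v u * y u` with `w v u = codegree v u / (k - 1)`; this weight is
symmetric, has row sums `d v` and off-diagonal entries at most `a = C(n-2, k-2) / (k - 1)`.
At a vertex `p` maximising `y` this gives `‖λ‖ y p ≤ a Z`, where `Z = ∑_{u ≠ p} y u`, while
summing over the other vertices and double counting gives
`(‖λ‖ - δ) Z ≤ y p (k m - (n - 1) δ - ‖λ‖)`. Hence either `‖λ‖ ≤ δ` or `‖λ‖` satisfies a
quadratic inequality whose larger root is the bound, once `C(n-1, k-1) = (n - 1) a`.
-/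

open scoped Nat

section Codegree

variable {α : Type*} [DecidableEq α]

def codegree (E : Finset (Finset α)) (u v : α) : ℕ := #{e ∈ E | u ∈ e ∧ v ∈ e}

lemma codegree_comm (E : Finset (Finset α)) (u v : α) : codegree E u v = codegree E v u := by
  simp only [codegree, and_comm]

variable [Fintype α]

lemma sum_sum_erase_eq_sum_codegree_smul {M : Type*} [AddCommMonoid M] (E : Finset (Finset α))
    (v : α) (g : α → M) :
    ∑ e ∈ E with v ∈ e, ∑ u ∈ e.erase v, g u = ∑ u ∈ univ.erase v, codegree E v u • g u := by
  simp_rw [codegree, ← sum_const]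
  exact sum_comm' fun e u => by simp only [mem_filter, mem_erase, mem_univ]; tauto

lemma sum_codegree {k : ℕ} {E : Finset (Finset α)} (huniform : ∀ e ∈ E, #e = k) (v : α) :
    ∑ u ∈ univ.erase v, codegree E v u = (k - 1) * #{e ∈ E | v ∈ e} := by
  have h := sum_sum_erase_eq_sum_codegree_smul E v (fun _ => 1)
  simp only [sum_const, smul_eq_mul, mul_one] at h
  rw [← h, sum_congr rfl fun e he => ?_, sum_const, smul_eq_mul, mul_comm]
  · rw [mem_filter] at he
    rw [card_erase_of_mem he.2, huniform e he.1]

lemma codegree_le_choose {k : ℕ} {E : Finset (Finset α)} (huniform : ∀ e ∈ E, #e = k) {u v : α}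
    (huv : u ≠ v) : codegree E u v ≤ (Fintype.card α - 2).choose (k - 2) := by
  have hsub : ∀ e ∈ ({e ∈ E | u ∈ e ∧ v ∈ e} : Finset _), {u, v} ⊆ e := fun e he => by
    simp [insert_subset_iff, (mem_filter.1 he).2]
  calc codegree E u v ≤ #(powersetCard (k - 2) (univ \ {u, v})) := by
        refine card_le_card_of_injOn (· \ {u, v}) (fun e he => ?_) (fun e₁ he₁ e₂ he₂ h => ?_)
        · rw [mem_coe, mem_powersetCard, card_sdiff_of_subset (hsub e he), card_pair huv,
            huniform e (mem_filter.1 he).1]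
          exact ⟨sdiff_subset_sdiff (subset_univ e) le_rfl, rfl⟩
        · rw [← sdiff_union_of_subset (hsub e₁ he₁), ← sdiff_union_of_subset (hsub e₂ he₂)]
          exact congrArg (· ∪ {u, v}) h
    _ = (Fintype.card α - 2).choose (k - 2) := by
        rw [card_powersetCard, card_sdiff_of_subset (subset_univ _), card_pair huv, card_univ]

lemma sum_card_filter_mem {k : ℕ} {E : Finset (Finset α)} (huniform : ∀ e ∈ E, #e = k) :
    ∑ v, #{e ∈ E | v ∈ e} = k * #E := by
  simp_rw [card_filter]
  rw [sum_comm, mul_comm, ← smul_eq_mul, ← sum_const]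
  refine sum_congr rfl fun e he => ?_
  rw [← huniform e he, ← card_filter, filter_mem_eq_inter, univ_inter]

end Codegree

lemma prod_le_sum_pow_card_div_card {ι : Type*} {s : Finset ι} (hs : s.Nonempty) {z : ι → ℝ}
    (hz : ∀ i ∈ s, 0 ≤ z i) : ∏ i ∈ s, z i ≤ (∑ i ∈ s, z i ^ #s) / #s := by
  have hcard : (#s : ℝ) ≠ 0 := by exact_mod_cast hs.card_pos.ne'
  calc ∏ i ∈ s, z i = ∏ i ∈ s, (z i ^ #s) ^ (#s : ℝ)⁻¹ := prod_congr rfl fun i hi => by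
        rw [← Real.rpow_natCast, ← Real.rpow_mul (hz i hi), mul_inv_cancel₀ hcard, Real.rpow_one]
    _ ≤ ∑ i ∈ s, (#s : ℝ)⁻¹ * z i ^ #s :=
        Real.geom_mean_le_arith_mean_weighted s _ _ (fun _ _ => by positivity)
          (by simp [hcard]) (fun i hi => pow_nonneg (hz i hi) _)
    _ = (∑ i ∈ s, z i ^ #s) / #s := by rw [← mul_sum, inv_mul_eq_div]

lemma card_filter_injective_image_eq_le {α : Type*} [Fintype α] [DecidableEq α] (K : ℕ)
    (s : Finset α) : #{f : Fin K → α | Function.Injective f ∧ image f univ = s} ≤ K ! := by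
  rcases eq_empty_or_nonempty {f : Fin K → α | Function.Injective f ∧ image f univ = s}
    with hempty | ⟨f₀, hf₀⟩
  · simp [hempty]
  have hs : #s = K := by
    obtain ⟨hinj, rfl⟩ := (mem_filter.1 hf₀).2
    rw [card_image_of_injective _ hinj, card_fin]
  calc _ ≤ #(univ : Finset (Fin K ↪ s)) := by
        refine card_le_card_of_surjOn (fun g j => g j) fun f hf => ?_
        obtain ⟨hinj, rfl⟩ := (mem_filter.1 hf).2
        exact ⟨⟨fun j => ⟨f j, mem_image_of_mem f (mem_univ j)⟩,
          fun i j h => hinj (congrArg Subtype.val h)⟩, mem_coe.2 (mem_univ _), rfl⟩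
    _ = K ! := by simp [Fintype.card_embedding_eq, hs, Nat.descFactorial_self]

section SymmetricWeights
variable {ι : Type*} [Fintype ι] {W : ι → ι → ℝ} {D y : ι → ℝ}

lemma sum_mul_le_of_le {δ M : ℝ} (hδ : ∀ v, δ ≤ D v) (hM : ∀ u, y u ≤ M) :
    ∑ u, D u * y u ≤ δ * ∑ u, y u + (∑ u, D u - Fintype.card ι * δ) * M := by
  calc ∑ u, D u * y u ≤ ∑ u, (δ * y u + (D u - δ) * M) :=
        sum_le_sum fun u _ => by nlinarith [hδ u, hM u]
    _ = δ * ∑ u, y u + (∑ u, D u - Fintype.card ι * δ) * M := by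
        rw [sum_add_distrib, ← mul_sum, ← sum_mul, sum_sub_distrib, sum_const, card_univ,
          nsmul_eq_mul]

variable [DecidableEq ι]

lemma sum_sum_erase_mul_eq (hW_symm : ∀ u v, W u v = W v u)
    (hW_row : ∀ v, ∑ u ∈ univ.erase v, W v u = D v) (y : ι → ℝ) :
    ∑ v, ∑ u ∈ univ.erase v, W v u * y u = ∑ u, D u * y u := by
  rw [sum_comm' (t' := univ) (s' := fun u => univ.erase u) fun v u => by simp [ne_comm]]
  refine sum_congr rfl fun u _ => ?_
  rw [← hW_row u, sum_mul]
  exact sum_congr rfl fun v _ => by rw [hW_symm]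

theorem le_or_mul_sub_le_of_mul_le_sum_erase {X δ a : ℝ} (hW_symm : ∀ u v, W u v = W v u)
    (hW_row : ∀ v, ∑ u ∈ univ.erase v, W v u = D v) (hW_le : ∀ u v, u ≠ v → W u v ≤ a)
    (ha : 0 ≤ a) (hδ : ∀ v, δ ≤ D v) (hy : 0 ≤ y) (hy_ne : y ≠ 0)
    (hX : ∀ v, X * y v ≤ ∑ u ∈ univ.erase v, W v u * y u) :
    X ≤ δ ∨ X * (X - δ) ≤ a * (∑ v, D v - Fintype.card ι * δ + δ - X) := by
  obtain ⟨i, hi⟩ := Function.ne_iff.1 hy_ne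
  obtain ⟨p, -, hp⟩ := exists_max_image univ y ⟨i, mem_univ i⟩
  set M := y p
  have hM : ∀ u, y u ≤ M := fun u => hp u (mem_univ u)
  have hM_pos : 0 < M := ((hy i).lt_of_ne' hi).trans_le (hM i)
  set Z := ∑ u ∈ univ.erase p, y u
  set S := ∑ u ∈ univ.erase p, W p u * y u
  have hSZ : S ≤ a * Z := by
    rw [mul_sum]
    exact sum_le_sum fun u hu =>
      mul_le_mul_of_nonneg_right (hW_le p u (mem_erase.1 hu).1.symm) (hy u)
  -- sum `hX` over `v ≠ p`; by symmetry of `W` the double sum is `∑ u, D u * y u - S`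
  have hXZ : X * Z ≤ ∑ u, D u * y u - S := by
    rw [← sum_sum_erase_mul_eq hW_symm hW_row, ← sum_erase_add _ _ (mem_univ p), mul_sum,
      add_sub_cancel_right]
    exact sum_le_sum fun v _ => hX v
  have hDy := sum_mul_le_of_le hδ hM
  rw [← sum_erase_add (univ : Finset ι) y (mem_univ p)] at hDy
  have hXp : X * M ≤ S := hX p
  have hZ : (X - δ) * Z ≤ M * (∑ v, D v - Fintype.card ι * δ + δ - X) := by
    linear_combination hXZ + hDy + hXp
  rcases le_or_gt X δ with hXδ | hXδ
  · exact Or.inl hXδ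
  · refine Or.inr (le_of_mul_le_mul_left ?_ hM_pos)
    nlinarith [mul_le_mul_of_nonneg_right (hXp.trans hSZ) (sub_nonneg.2 hXδ.le),
      mul_le_mul_of_nonneg_left hZ ha]

end SymmetricWeights

lemma two_mul_le_sub_add_sqrt {X δ a t : ℝ} (ha : 0 ≤ a) (ht : 0 ≤ t)
    (h : X ≤ δ ∨ X * (X - δ) ≤ a * (t + δ - X)) :
    2 * X ≤ δ - a + √((δ + a) ^ 2 + 4 * a * t) := by
  rcases h with h | h
  · have : δ + a ≤ √((δ + a) ^ 2 + 4 * a * t) :=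
      (le_abs_self _).trans (Real.abs_le_sqrt (by nlinarith [mul_nonneg ha ht]))
    linarith
  · have : 2 * X - (δ - a) ≤ √((δ + a) ^ 2 + 4 * a * t) :=
      (le_abs_self _).trans (Real.abs_le_sqrt (by nlinarith))
    linarith

lemma cast_choose_sub_one {n k : ℕ} (hk : 2 ≤ k) (hn : 2 ≤ n) :
    ((n - 1).choose (k - 1) : ℝ) = (n - 1) * ((n - 2).choose (k - 2) / ((k : ℝ) - 1)) := by
  obtain ⟨n, rfl⟩ := Nat.exists_eq_add_of_le' hn
  obtain ⟨k, rfl⟩ := Nat.exists_eq_add_of_le' hk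
  have h : ((n + 1 : ℕ) : ℝ) * n.choose k = (n + 1).choose (k + 1) * (k + 1 : ℕ) := by
    exact_mod_cast Nat.add_one_mul_choose_eq n k
  have hk₁ : ((k + 2 : ℕ) : ℝ) - 1 ≠ 0 := by push_cast; linarith
  simp only [Nat.add_sub_cancel, show n + 2 - 1 = n + 1 by omega, show k + 2 - 1 = k + 1 by omega]
  rw [← mul_div_assoc, eq_div_iff hk₁]
  push_cast at h ⊢
  linear_combination -h

section AdjacencyTensor

variable {n k : ℕ} (E : Finset (Finset (Fin n)))

open Classical in
lemma sum_adjTensor_mul_sum_le (v : Fin n) {g : Fin n → ℝ} (hg : 0 ≤ g) :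
    ∑ f, adjTensor n k E v f * ∑ j, g (f j) ≤ ∑ u ∈ univ.erase v, codegree E v u * g u := by
  set Good : (Fin (k - 1) → Fin n) → Prop := fun f =>
    Function.Injective f ∧ v ∉ image f univ ∧ insert v (image f univ) ∈ E
  set G : Finset (Fin n) → ℝ := fun e => ∑ u ∈ e.erase v, g u
  have hG : ∀ f, Good f → ∑ j, g (f j) = G (insert v (image f univ)) := fun f hf => by
    simp only [G, erase_insert hf.2.1, sum_image fun i _ j _ h => hf.1 h]
  have hfiber : ∀ e, #{f | Good f ∧ insert v (image f univ) = e} ≤ (k - 1)! := fun e =>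
    (card_le_card fun f hf => by
      simp only [mem_filter, mem_univ, true_and] at hf ⊢
      exact ⟨hf.1.1, by rw [← hf.2, erase_insert hf.1.2.1]⟩).trans
    (card_filter_injective_image_eq_le (k - 1) (e.erase v))
  calc ∑ f, adjTensor n k E v f * ∑ j, g (f j)
      = ((k - 1)! : ℝ)⁻¹ * ∑ f with Good f, G (insert v (image f univ)) := by
        rw [mul_sum, sum_filter]
        refine sum_congr rfl fun f _ => ?_
        unfold adjTensor
        split_ifs with hf
        · rw [hG f hf, one_div]
        · rw [zero_mul]
    -- group the orderings `f` by the edge `insert v (image f univ)` they enumerate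
    _ = ((k - 1)! : ℝ)⁻¹ * ∑ e ∈ ({f | Good f} : Finset _).image (insert v <| image · univ),
          #{f | Good f ∧ insert v (image f univ) = e} • G e := by
        rw [sum_comp]
        simp only [filter_filter]
    _ ≤ ((k - 1)! : ℝ)⁻¹ * ∑ e ∈ E with v ∈ e, ((k - 1)! : ℝ) * G e := by
        have hG0 : ∀ e, 0 ≤ G e := fun e => sum_nonneg fun u _ => hg u
        gcongr
        refine (sum_le_sum fun e _ => ?_).trans (sum_le_sum_of_subset_of_nonneg ?_ ?_)
        · rw [nsmul_eq_mul]
          exact mul_le_mul_of_nonneg_right (by exact_mod_cast hfiber e) (hG0 e)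
        · intro e he
          obtain ⟨f, hf, rfl⟩ := mem_image.1 he
          exact mem_filter.2 ⟨(mem_filter.1 hf).2.2.2, mem_insert_self v _⟩
        · exact fun e _ _ => mul_nonneg (by positivity) (hG0 e)
    _ = ∑ u ∈ univ.erase v, codegree E v u * g u := by
        rw [← mul_sum, inv_mul_cancel_left₀ (by positivity), sum_sum_erase_eq_sum_codegree_smul]
        simp only [nsmul_eq_mul]

lemma norm_mul_pow_le_sum_codegree (hk : 2 ≤ k) {lam : ℂ} {x : Fin n → ℂ} {v : Fin n}
    (hx : ∑ f, ((adjTensor n k E v f : ℝ) : ℂ) * ∏ j, x (f j) = lam * x v ^ (k - 1)) :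
    ‖lam‖ * ‖x v‖ ^ (k - 1) ≤
      ∑ u ∈ univ.erase v, codegree E v u / ((k : ℝ) - 1) * ‖x u‖ ^ (k - 1) := by
  have hK : ((k - 1 : ℕ) : ℝ) = (k : ℝ) - 1 := by rw [Nat.cast_sub (by omega), Nat.cast_one]
  have hA : ∀ f, 0 ≤ adjTensor n k E v f := fun f => by
    unfold adjTensor; split_ifs <;> positivity
  have hamgm : ∀ f : Fin (k - 1) → Fin n,
      ∏ j, ‖x (f j)‖ ≤ (∑ j, ‖x (f j)‖ ^ (k - 1)) / ((k : ℝ) - 1) := fun f => by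
    simpa [hK] using prod_le_sum_pow_card_div_card (s := univ) (univ_nonempty_iff.2 ⟨⟨0, by omega⟩⟩)
      (z := fun j => ‖x (f j)‖) (fun j _ => norm_nonneg _)
  calc ‖lam‖ * ‖x v‖ ^ (k - 1) = ‖∑ f, ((adjTensor n k E v f : ℝ) : ℂ) * ∏ j, x (f j)‖ := by
        rw [hx, norm_mul, norm_pow]
    _ ≤ ∑ f, adjTensor n k E v f * ∏ j, ‖x (f j)‖ := (norm_sum_le _ _).trans_eq <|
        sum_congr rfl fun f _ => by
          rw [norm_mul, norm_prod, Complex.norm_real, Real.norm_of_nonneg (hA f)]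
    _ ≤ ∑ f, adjTensor n k E v f * ((∑ j, ‖x (f j)‖ ^ (k - 1)) / ((k : ℝ) - 1)) :=
        sum_le_sum fun f _ => mul_le_mul_of_nonneg_left (hamgm f) (hA f)
    _ = (∑ f, adjTensor n k E v f * ∑ j, ‖x (f j)‖ ^ (k - 1)) / ((k : ℝ) - 1) := by
        simp only [sum_div, mul_div_assoc]
    _ ≤ (∑ u ∈ univ.erase v, codegree E v u * ‖x u‖ ^ (k - 1)) / ((k : ℝ) - 1) := by
        gcongr
        · rw [← hK]; positivity
        · exact sum_adjTensor_mul_sum_le E v fun u => pow_nonneg (norm_nonneg (x u)) _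
    _ = ∑ u ∈ univ.erase v, codegree E v u / ((k : ℝ) - 1) * ‖x u‖ ^ (k - 1) := by
        simp only [sum_div, div_mul_eq_mul_div]

theorem norm_le_or_mul_sub_le_of_isTensorEigenvalue {k δ : ℕ} (hk : 2 ≤ k)
    (huniform : ∀ e ∈ E, #e = k) (hδ : ∀ i, δ ≤ hdegree n E i) {lam : ℂ}
    (hlam : IsTensorEigenvalue n k (fun i f => ((adjTensor n k E i f : ℝ) : ℂ)) lam) :
    ‖lam‖ ≤ δ ∨ ‖lam‖ * (‖lam‖ - δ) ≤
      (n - 2).choose (k - 2) / ((k : ℝ) - 1) * (k * #E - n * δ + δ - ‖lam‖) := by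
  obtain ⟨x, hx_ne, hx⟩ := hlam
  have hk₁ : ((k - 1 : ℕ) : ℝ) = (k : ℝ) - 1 := by rw [Nat.cast_sub (by omega), Nat.cast_one]
  have hk₁_pos : (0 : ℝ) < k - 1 := by rw [← hk₁]; exact_mod_cast (by omega : 0 < k - 1)
  have hdeg : ∑ v, (hdegree n E v : ℝ) = k * #E := by
    exact_mod_cast sum_card_filter_mem huniform
  have hy_ne : (fun u => ‖x u‖ ^ (k - 1)) ≠ 0 := by
    obtain ⟨i, hi⟩ := Function.ne_iff.1 hx_ne
    exact Function.ne_iff.2 ⟨i, pow_ne_zero _ (norm_ne_zero_iff.2 hi)⟩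
  simpa only [hdeg, Fintype.card_fin] using le_or_mul_sub_le_of_mul_le_sum_erase
    (W := fun v u => codegree E v u / ((k : ℝ) - 1)) (D := fun v => hdegree n E v)
    (fun u v => by rw [codegree_comm])
    (fun v => by
      rw [← sum_div, div_eq_iff hk₁_pos.ne', ← hk₁, ← Nat.cast_sum, sum_codegree huniform, hdegree]
      push_cast; ring)
    (fun u v huv => div_le_div_of_nonneg_right (by
      simpa using (Nat.cast_le (α := ℝ)).2 (codegree_le_choose huniform huv)) hk₁_pos.le)
    (by positivity) (fun v => by exact_mod_cast hδ v)
    (fun u => by positivity) hy_ne (fun v => norm_mul_pow_le_sum_codegree E hk (hx v))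

end AdjacencyTensor

theorem spectral_radius_le_of_min_degree_general (n k : ℕ) (hk : 2 ≤ k) (hn : k ≤ n)
    (E : Finset (Finset (Fin n))) (huniform : ∀ e ∈ E, e.card = k)
    (m δ : ℕ) (hm : m = E.card)
    (hδ₁ : ∀ i : Fin n, δ ≤ hdegree n E i)
    (lam : ℂ) (hlam : IsTensorEigenvalue n k (fun i f => ((adjTensor n k E i f : ℝ) : ℂ)) lam) :
    ‖lam‖ ≤
      ((δ : ℝ) - ((n - 1).choose (k - 1) : ℝ)
          + (((n : ℝ) - 2) / ((k : ℝ) - 1)) * ((n - 2).choose (k - 2) : ℝ)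
        + Real.sqrt (((δ : ℝ) + ((n : ℝ) / ((k : ℝ) - 1)) * ((n - 2).choose (k - 2) : ℝ)
              - ((n - 1).choose (k - 1) : ℝ)) ^ 2
            + (4 / ((k : ℝ) - 1)) * ((n - 2).choose (k - 2) : ℝ)
              * ((k : ℝ) * (m : ℝ) - (n : ℝ) * (δ : ℝ)))) / 2 := by
  have key := norm_le_or_mul_sub_le_of_isTensorEigenvalue E hk huniform hδ₁ hlam
  rw [← hm] at key
  have hnδ : n * δ ≤ k * m := by
    rw [hm, ← sum_card_filter_mem huniform]
    simpa using card_nsmul_le_sum univ (fun v => #{e ∈ E | v ∈ e}) δ fun v _ => hδ₁ v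
  have hk₁ : (0 : ℝ) < k - 1 := by
    rw [sub_pos]; exact_mod_cast hk
  have hbound := two_mul_le_sub_add_sqrt (div_nonneg (Nat.cast_nonneg _) hk₁.le) (by
    rw [sub_nonneg]; exact_mod_cast hnδ) key
  set a : ℝ := (n - 2).choose (k - 2) / ((k : ℝ) - 1)
  have hlin : (δ : ℝ) - (n - 1) * a + (n - 2) / (k - 1) * (n - 2).choose (k - 2) = δ - a := by
    simp only [a]; field_simp [hk₁.ne']; ring
  have hdisc : ((δ : ℝ) + n / (k - 1) * (n - 2).choose (k - 2) - (n - 1) * a) ^ 2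
      + 4 / (k - 1) * (n - 2).choose (k - 2) * (k * m - n * δ)
      = (δ + a) ^ 2 + 4 * a * (k * m - n * δ) := by
    simp only [a]; field_simp [hk₁.ne']; ring
  rw [cast_choose_sub_one hk (hk.trans hn), hlin, hdisc]
  linarith

/-- **Corollary 3.3.**  Let `H` be a `k`-uniform hypergraph on `{1,…,n}` with `m` edges and
minimum degree `δ`.  Then every eigenvalue `lam` of the adjacency tensor satisfies
`|lam| ≤ (δ − C(n−1,k−1) + ((n−2)/(k−1))·C(n−2,k−2)
  + √((δ + (n/(k−1))·C(n−2,k−2) − C(n−1,k−1))² + (4/(k−1))·C(n−2,k−2)·(km − nδ)))/2`. -/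
theorem spectral_radius_le_of_min_degree (n k : ℕ) (hk : 2 ≤ k) (hn : k ≤ n)
    (E : Finset (Finset (Fin n))) (huniform : ∀ e ∈ E, e.card = k)
    (m δ : ℕ) (hm : m = E.card)
    (hδ₁ : ∀ i : Fin n, δ ≤ hdegree n E i) (hδ₂ : ∃ i : Fin n, hdegree n E i = δ)
    (lam : ℂ) (hlam : IsTensorEigenvalue n k (fun i f => ((adjTensor n k E i f : ℝ) : ℂ)) lam) :
    ‖lam‖ ≤
      ((δ : ℝ) - ((n - 1).choose (k - 1) : ℝ)
          + (((n : ℝ) - 2) / ((k : ℝ) - 1)) * ((n - 2).choose (k - 2) : ℝ)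
        + Real.sqrt (((δ : ℝ) + ((n : ℝ) / ((k : ℝ) - 1)) * ((n - 2).choose (k - 2) : ℝ)
              - ((n - 1).choose (k - 1) : ℝ)) ^ 2
            + (4 / ((k : ℝ) - 1)) * ((n - 2).choose (k - 2) : ℝ)
              * ((k : ℝ) * (m : ℝ) - (n : ℝ) * (δ : ℝ)))) / 2 :=
  spectral_radius_le_of_min_degree_general n k hk hn E huniform m δ hm hδ₁ lam hlam
end

section
/- Let T = (t_{i_1 … i_k}) be an order-k, dimension-n tensor with k ≥ 2 whose entries are nonnegative real numbers. Then every eigenvalue λ of T satisfies |λ| ≤ max_{1 ≤ i ≤ n} R_i(T), where R_i(T) = ∑_{i_2,…,i_k=1}^n t_{i i_2 … i_k} is the i-th row sum of T. -/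
/-! Take a coordinate `i` at which `|x_i|` is maximal. Every monomial `x_{i₂} ⋯ x_{i_k}` then has
modulus at most `|x_i|^{k-1}`, so the `i`-th eigen-equation gives
`|λ| |x_i|^{k-1} ≤ R_i(T) |x_i|^{k-1}`, and `|x_i| > 0` because `x ≠ 0`. -/

open Finset

theorem norm_sum_mul_prod_le {ι R : Type*} [Fintype ι] [NormedCommRing R] [NormOneClass R]
    {m : ℕ} (c : (Fin m → ι) → R) (x : ι → R) {M : ℝ} (hM : ∀ i, ‖x i‖ ≤ M) :
    ‖∑ f : Fin m → ι, c f * ∏ j, x (f j)‖ ≤ (∑ f : Fin m → ι, ‖c f‖) * M ^ m := by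
  rw [sum_mul]
  refine (norm_sum_le _ _).trans (sum_le_sum fun f _ => ?_)
  have hprod : ‖∏ j, x (f j)‖ ≤ M ^ m :=
    calc ‖∏ j, x (f j)‖ ≤ ∏ j, ‖x (f j)‖ := norm_prod_le _ _
      _ ≤ ∏ _j : Fin m, M := prod_le_prod (fun _ _ => norm_nonneg _) fun j _ => hM (f j)
      _ = M ^ m := by rw [prod_const, card_univ, Fintype.card_fin]
  exact (norm_mul_le _ _).trans (mul_le_mul_of_nonneg_left hprod (norm_nonneg _))

theorem exists_norm_le_norm_of_ne_zero {ι E : Type*} [Finite ι] [NormedAddGroup E]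
    {x : ι → E} (hx : x ≠ 0) : ∃ i, 0 < ‖x i‖ ∧ ∀ j, ‖x j‖ ≤ ‖x i‖ := by
  obtain ⟨j, hj⟩ := Function.ne_iff.mp hx
  have : Nonempty ι := ⟨j⟩
  obtain ⟨i, hi⟩ := Finite.exists_max fun i => ‖x i‖
  exact ⟨i, (norm_pos_iff.mpr hj).trans_le (hi j), hi⟩

theorem IsTensorEigenvalue.exists_norm_le_sum_norm {n k : ℕ}
    {T : Fin n → (Fin (k - 1) → Fin n) → ℂ} {lam : ℂ} (h : IsTensorEigenvalue n k T lam) :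
    ∃ i, ‖lam‖ ≤ ∑ f : Fin (k - 1) → Fin n, ‖T i f‖ := by
  obtain ⟨x, hx0, hx⟩ := h
  obtain ⟨i, hpos, hmax⟩ := exists_norm_le_norm_of_ne_zero hx0
  refine ⟨i, le_of_mul_le_mul_right ?_ (pow_pos hpos (k - 1))⟩
  calc ‖lam‖ * ‖x i‖ ^ (k - 1) = ‖∑ f, T i f * ∏ j, x (f j)‖ := by
        rw [hx i, norm_mul, norm_pow]
    _ ≤ _ := norm_sum_mul_prod_le _ _ hmax

/-- **Lemma 2.1.**  Every eigenvalue of a nonnegative tensor of order `k ≥ 2` and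
dimension `n` is bounded in modulus by the maximum row sum
`max_{1 ≤ i ≤ n} R_i(T)`, where `R_i(T) = ∑_{i₂,…,i_k} t_{i i₂ … i_k}`. -/
theorem eigenvalue_abs_le_max_row_sum (n k : ℕ) (hn : 1 ≤ n)
    (T : Fin n → (Fin (k - 1) → Fin n) → ℝ) (hT : ∀ i f, 0 ≤ T i f)
    (lam : ℂ) (hlam : IsTensorEigenvalue n k (fun i f => ((T i f : ℝ) : ℂ)) lam) :
    ‖lam‖ ≤
      Finset.univ.sup' ⟨⟨0, by omega⟩, Finset.mem_univ _⟩
        (fun i : Fin n => ∑ f : Fin (k - 1) → Fin n, T i f) := by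
  obtain ⟨i, hi⟩ := hlam.exists_norm_le_sum_norm
  have hrow : ∑ f, ‖((T i f : ℝ) : ℂ)‖ = ∑ f, T i f :=
    sum_congr rfl fun f _ => by rw [Complex.norm_real, Real.norm_of_nonneg (hT i f)]
  exact (hi.trans hrow.le).trans (le_sup' (fun i => ∑ f, T i f) (mem_univ i))
end

section
/- Let A = (a_{i_1 … i_k}) be an order-k, dimension-n complex tensor with k ≥ 2, and let δ_1, …, δ_n be nonzero complex numbers. Define the order-k, dimension-n tensor B = (b_{i_1 … i_k}) by b_{i_1 i_2 … i_k} = δ_{i_1}^{−(k−1)} · a_{i_1 i_2 … i_k} · δ_{i_2} ⋯ δ_{i_k} (this is the diagonal similarity B = D^{−(k−1)} · A · D for the diagonal matrix D = diag(δ_1,…,δ_n)). Then a complex number λ is an eigenvalue of A if and only if λ is an eigenvalue of B. -/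
open Finset

/-- The diagonal similarity `D^{-(k-1)} · T · D` with `D = diag δ`. -/
noncomputable def tensorDiagScale {n k : ℕ} (δ : Fin n → ℂ)
    (T : Fin n → (Fin (k - 1) → Fin n) → ℂ) :
    Fin n → (Fin (k - 1) → Fin n) → ℂ :=
  fun i f => (δ i)⁻¹ ^ (k - 1) * T i f * ∏ j, δ (f j)

theorem sum_mul_prod_mul_inv_mul_prod {K ι κ : Type*} [Field K] [Fintype ι] [Fintype κ]
    [DecidableEq κ] (c : K) (T : (κ → ι) → K) (δ x : ι → K) (hδ : ∀ i, δ i ≠ 0) :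
    ∑ f : κ → ι, c * T f * (∏ j, δ (f j)) * ∏ j, (δ (f j))⁻¹ * x (f j) =
      c * ∑ f : κ → ι, T f * ∏ j, x (f j) := by
  rw [mul_sum]
  refine sum_congr rfl fun f _ => ?_
  rw [mul_assoc, mul_assoc, ← prod_mul_distrib]
  simp only [mul_inv_cancel_left₀ (hδ _)]

theorem IsTensorEigenvalue.tensorDiagScale {n k : ℕ} {A : Fin n → (Fin (k - 1) → Fin n) → ℂ}
    {lam : ℂ} (h : IsTensorEigenvalue n k A lam) {δ : Fin n → ℂ} (hδ : ∀ i, δ i ≠ 0) :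
    IsTensorEigenvalue n k (tensorDiagScale δ A) lam := by
  obtain ⟨x, hx, hxA⟩ := h
  refine ⟨fun i => (δ i)⁻¹ * x i, ?_, fun i => ?_⟩
  · obtain ⟨j, hj⟩ := Function.ne_iff.mp hx
    exact Function.ne_iff.mpr ⟨j, mul_ne_zero (inv_ne_zero (hδ j)) hj⟩
  · simp only [_root_.tensorDiagScale]
    rw [sum_mul_prod_mul_inv_mul_prod _ (A i) _ _ hδ, hxA i]
    ring

theorem tensorDiagScale_inv_tensorDiagScale {n k : ℕ} (A : Fin n → (Fin (k - 1) → Fin n) → ℂ)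
    {δ : Fin n → ℂ} (hδ : ∀ i, δ i ≠ 0) :
    tensorDiagScale (fun i => (δ i)⁻¹) (tensorDiagScale δ A) = A := by
  funext i f
  have hδi : δ i ^ (k - 1) ≠ 0 := pow_ne_zero _ (hδ i)
  have hδf : ∏ j, δ (f j) ≠ 0 := prod_ne_zero_iff.mpr fun j _ => hδ (f j)
  simp only [tensorDiagScale, inv_inv, inv_pow, prod_inv_distrib]
  field_simp

theorem diag_similar_same_eigenvalues_general (n k : ℕ)
    (A : Fin n → (Fin (k - 1) → Fin n) → ℂ)
    (δ : Fin n → ℂ) (hδ : ∀ i, δ i ≠ 0) (lam : ℂ) :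
    IsTensorEigenvalue n k A lam ↔
      IsTensorEigenvalue n k
        (fun i f => (δ i)⁻¹ ^ (k - 1) * A i f * ∏ j, δ (f j)) lam := by
  refine ⟨fun h => h.tensorDiagScale hδ, fun h => ?_⟩
  rw [← tensorDiagScale_inv_tensorDiagScale A hδ]
  exact h.tensorDiagScale fun i => inv_ne_zero (hδ i)

/-- **Lemma 2.2 (diagonal similarity).**  Let `A` be an order-`k`, dimension-`n` complex
tensor (`k ≥ 2`) and `δ₁, …, δ_n` nonzero complex numbers.  The tensor
`B = D^{−(k−1)} · A · D`, with `D = diag(δ₁, …, δ_n)`, with entries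
`b_{i₁ i₂ … i_k} = δ_{i₁}^{−(k−1)} · a_{i₁ i₂ … i_k} · δ_{i₂} ⋯ δ_{i_k}`,
has the same eigenvalues as `A`. -/
theorem diag_similar_same_eigenvalues (n k : ℕ) (hk : 2 ≤ k) (hn : 1 ≤ n)
    (A : Fin n → (Fin (k - 1) → Fin n) → ℂ)
    (δ : Fin n → ℂ) (hδ : ∀ i, δ i ≠ 0) (lam : ℂ) :
    IsTensorEigenvalue n k A lam ↔
      IsTensorEigenvalue n k
        (fun i f => (δ i)⁻¹ ^ (k - 1) * A i f * ∏ j, δ (f j)) lam :=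
  diag_similar_same_eigenvalues_general n k A δ hδ lam
end

section
/- Let n, s, k be integers with n ≥ s ≥ 3 and k ≥ 2. Then ∑_{r=0}^{k−2} (r+1) · C(s−1, r+1) · C(n−s, k−r−2) = ∑_{r=0}^{k−2} (k−1−r) · C(s−2, k−r−1) · C(n−s+1, r) + C(n−2, k−2). -/
lemma vand_aux (x y l : ℕ) :
    ∑ r ∈ Finset.range (l + 1), x.choose r * y.choose (l - r) = (x + y).choose l := by
  rw [Nat.add_choose_eq, Finset.Nat.sum_antidiagonal_eq_sum_range_succ_mk]

lemma main_aux (a m l : ℕ) :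
    ∑ r ∈ Finset.range (l + 1), (r + 1) * (a + 2).choose (r + 1) * m.choose (l - r)
      = (∑ r ∈ Finset.range (l + 1),
          (l + 1 - r) * (a + 1).choose (l + 1 - r) * (m + 1).choose r)
        + (a + m + 1).choose l := by
  have habs : ∀ (b r : ℕ), (r + 1) * (b + 1).choose (r + 1) = (b + 1) * b.choose r := by
    intro b r
    have := Nat.add_one_mul_choose_eq b r
    simpa [Nat.succ_eq_add_one, mul_comm] using this.symm
  have hL : ∑ r ∈ Finset.range (l + 1), (r + 1) * (a + 2).choose (r + 1) * m.choose (l - r)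
      = (a + 2) * (a + m + 1).choose l := by
    rw [show a + m + 1 = (a + 1) + m by omega, ← vand_aux (a+1) m l, Finset.mul_sum]
    refine Finset.sum_congr rfl fun r _ => ?_
    rw [show (a:ℕ) + 2 = (a + 1) + 1 from rfl, habs (a+1) r]
    ring
  have hR : ∑ r ∈ Finset.range (l + 1),
        (l + 1 - r) * (a + 1).choose (l + 1 - r) * (m + 1).choose r
      = (a + 1) * (a + m + 1).choose l := by
    rw [← Finset.sum_range_reflect
      (fun r => (l + 1 - r) * (a + 1).choose (l + 1 - r) * (m + 1).choose r) (l + 1)]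
    rw [show a + m + 1 = a + (m + 1) by omega, ← vand_aux a (m+1) l, Finset.mul_sum]
    refine Finset.sum_congr rfl fun r hr => ?_
    simp only [Finset.mem_range] at hr
    have h1 : l + 1 - 1 - r = l - r := by omega
    have h2 : l + 1 - (l - r) = r + 1 := by omega
    simp only [h1, h2, habs a r]
    ring
  rw [hL, hR]; ring

/-- For integers `n ≥ s ≥ 3` and `k ≥ 2`,
`∑_{r=0}^{k−2} (r+1)·C(s−1, r+1)·C(n−s, k−r−2)
   = ∑_{r=0}^{k−2} (k−1−r)·C(s−2, k−r−1)·C(n−s+1, r) + C(n−2, k−2)`. -/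
theorem sum_weighted_choose_identity (n s k : ℕ) (hns : s ≤ n) (hs : 3 ≤ s) (hk : 2 ≤ k) :
    ∑ r ∈ Finset.range (k - 1), (r + 1) * (s - 1).choose (r + 1) * (n - s).choose (k - r - 2)
      = (∑ r ∈ Finset.range (k - 1),
          (k - 1 - r) * (s - 2).choose (k - r - 1) * (n - s + 1).choose r)
        + (n - 2).choose (k - 2) := by
  obtain ⟨a, rfl⟩ : ∃ a, s = a + 3 := ⟨s - 3, by omega⟩
  obtain ⟨m, rfl⟩ : ∃ m, n = a + 3 + m := ⟨n - (a + 3), by omega⟩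
  obtain ⟨l, rfl⟩ : ∃ l, k = l + 2 := ⟨k - 2, by omega⟩
  have e1 : a + 3 - 1 = a + 2 := by omega
  have e2 : a + 3 - 2 = a + 1 := by omega
  have e3 : a + 3 + m - (a + 3) = m := by omega
  have e4 : l + 2 - 1 = l + 1 := by omega
  have e5 : a + 3 + m - 2 = a + m + 1 := by omega
  have e6 : l + 2 - 2 = l := by omega
  rw [e1, e2, e3, e4, e5, e6]
  have hA : ∑ r ∈ Finset.range (l + 1),
        (r + 1) * (a + 2).choose (r + 1) * m.choose (l + 2 - r - 2)
      = ∑ r ∈ Finset.range (l + 1), (r + 1) * (a + 2).choose (r + 1) * m.choose (l - r) := by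
    refine Finset.sum_congr rfl fun r hr => ?_
    rw [show l + 2 - r - 2 = l - r by omega]
  have hB : ∑ r ∈ Finset.range (l + 1),
        (l + 1 - r) * (a + 1).choose (l + 2 - r - 1) * (m + 1).choose r
      = ∑ r ∈ Finset.range (l + 1),
        (l + 1 - r) * (a + 1).choose (l + 1 - r) * (m + 1).choose r := by
    refine Finset.sum_congr rfl fun r hr => ?_
    rw [show l + 2 - r - 1 = l + 1 - r by omega]
  rw [hA, hB, main_aux a m l]
end

section
/- Let n, s, k be integers with n ≥ s ≥ 3 and k ≥ 2. Then (k−1) · C(n−1, k−1) = ∑_{r=0}^{k−2} (k−r−1) · C(s−2, k−r−1) · C(n−s+1, r) + ∑_{r=0}^{k−2} (k−r−1) · C(s−1, r) · C(n−s, k−r−1) + C(n−2, k−2). -/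
open Finset

private lemma vdm' (m n K : ℕ) :
    ∑ r ∈ range (K + 1), m.choose r * n.choose (K - r) = (m + n).choose K := by
  rw [Nat.add_choose_eq, Finset.Nat.sum_antidiagonal_eq_sum_range_succ_mk]

private lemma mul_choose' (m j : ℕ) :
    (j + 1) * m.choose (j + 1) = m * (m - 1).choose j := by
  cases m with
  | zero => simp
  | succ m' => rw [Nat.succ_sub_one, mul_comm, Nat.add_one_mul_choose_eq, mul_comm]

/-- For integers `n ≥ s ≥ 3` and `k ≥ 2`,
`(k−1)·C(n−1, k−1) = ∑_{r=0}^{k−2} (k−r−1)·C(s−2, k−r−1)·C(n−s+1, r)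
    + ∑_{r=0}^{k−2} (k−r−1)·C(s−1, r)·C(n−s, k−r−1) + C(n−2, k−2)`. -/
theorem derivative_coefficient_identity' (n s k : ℕ) (hns : s ≤ n) (hs : 3 ≤ s) (hk : 2 ≤ k) :
    (k - 1) * (n - 1).choose (k - 1)
      = (∑ r ∈ Finset.range (k - 1),
          (k - r - 1) * (s - 2).choose (k - r - 1) * (n - s + 1).choose r)
        + (∑ r ∈ Finset.range (k - 1),
            (k - r - 1) * (s - 1).choose r * (n - s).choose (k - r - 1))
        + (n - 2).choose (k - 2) := by
  obtain ⟨a, rfl⟩ : ∃ a, s = a + 3 := ⟨s - 3, by omega⟩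
  obtain ⟨b, rfl⟩ : ∃ b, n = a + 3 + b := ⟨n - (a + 3), by omega⟩
  obtain ⟨K, rfl⟩ : ∃ K, k = K + 2 := ⟨k - 2, by omega⟩
  have h1 : K + 2 - 1 = K + 1 := by omega
  have h2 : a + 3 - 2 = a + 1 := by omega
  have h3 : a + 3 + b - (a + 3) = b := by omega
  have h4 : a + 3 - 1 = a + 2 := by omega
  have h5 : a + 3 + b - 1 = (a + b + 1) + 1 := by omega
  have h6 : a + 3 + b - 2 = a + b + 1 := by omega
  have h7 : K + 2 - 2 = K := by omega
  rw [h1, h2, h3, h4, h5, h6, h7]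
  have sum1 : ∑ r ∈ range (K + 1),
      (K + 2 - r - 1) * (a + 1).choose (K + 2 - r - 1) * (b + 1).choose r
      = (a + 1) * (a + b + 1).choose K := by
    have : ∀ r ∈ range (K + 1),
        (K + 2 - r - 1) * (a + 1).choose (K + 2 - r - 1) * (b + 1).choose r
        = (a + 1) * ((b + 1).choose r * a.choose (K - r)) := by
      intro r hr
      rw [mem_range] at hr
      have hKr : K + 2 - r - 1 = (K - r) + 1 := by omega
      rw [hKr, mul_choose']
      simp [Nat.add_sub_cancel]
      ring
    rw [Finset.sum_congr rfl this, ← Finset.mul_sum, vdm',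
      show b + 1 + a = a + b + 1 from by omega]
  have sum2 : ∑ r ∈ range (K + 1),
      (K + 2 - r - 1) * (a + 2).choose r * b.choose (K + 2 - r - 1)
      = b * (a + b + 1).choose K := by
    cases b with
    | zero =>
      rw [Finset.sum_eq_zero, zero_mul]
      intro r hr
      rw [mem_range] at hr
      have hKr : K + 2 - r - 1 = (K - r) + 1 := by omega
      rw [hKr]
      simp
    | succ b' =>
      have : ∀ r ∈ range (K + 1),
          (K + 2 - r - 1) * (a + 2).choose r * (b' + 1).choose (K + 2 - r - 1)
          = (b' + 1) * ((a + 2).choose r * b'.choose (K - r)) := by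
        intro r hr
        rw [mem_range] at hr
        have hKr : K + 2 - r - 1 = (K - r) + 1 := by omega
        rw [hKr]
        have := mul_choose' (b' + 1) (K - r)
        simp only [Nat.add_sub_cancel] at this
        calc ((K - r) + 1) * (a + 2).choose r * (b' + 1).choose ((K - r) + 1)
            = (a + 2).choose r * (((K - r) + 1) * (b' + 1).choose ((K - r) + 1)) := by ring
          _ = (b' + 1) * ((a + 2).choose r * b'.choose (K - r)) := by rw [this]; ring
      rw [Finset.sum_congr rfl this, ← Finset.mul_sum, vdm',
        show a + 2 + b' = a + (b' + 1) + 1 from by omega]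
  rw [sum1, sum2, mul_choose']
  simp only [Nat.add_sub_cancel]
  ring
end
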